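/- Let k ∈ ℝ, let w_A, w_B : ℝ → ℂ be C^∞ functions with w_A(x) + w_B(x) = x + k, let s_A, s_B be antiderivatives of w_A, w_B with s_A(x) + s_B(x) = x²/2 + kx, let N_φ·conj(N_Ψ) = e^{−k²/2}/√(2π), and define φ_n, Ψ_n as in the pseudo-bosonic construction (φ_n = (1/√(n!)) Bⁿ (N_φ e^{−s_A}), Ψ_n = (1/√(n!)) (A†)ⁿ (N_Ψ e^{−conj(s_B)})). Define c_n(x) = 2^{−1/4}·e_n((x+k)/√2) where e_n(y) = (2ⁿ n! √π)^{−1/2} H_n(y) e^{−y²/2} is the n-th Hermite function, and ρ_A(x) = N_φ (2π)^{1/4} e^{(x+k)²/4} e^{−s_A(x)}, ρ_B(x) = N_Ψ (2π)^{1/4} e^{(x+k)²/4} e^{−conj(s_B(x))}. Then for every n ≥ 0 and x ∈ ℝ: φ_n(x) = c_n(x)·ρ_A(x) and Ψ_n(x) = c_n(x)·ρ_B(x), and moreover ρ_A(x)·conj(ρ_B(x)) = 1 for all x ∈ ℝ. -/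

import Mathlib

noncomputable section

/-- The pseudo-bosonic raising operator `B = -d/dx + w_B`. -/
def opB (wB : ℝ → ℂ) (f : ℝ → ℂ) : ℝ → ℂ :=
  fun x => -deriv f x + wB x * f x

/-- The pseudo-bosonic raising operator `A† = -d/dx + conj w_A`. -/
def opAdag (wA : ℝ → ℂ) (f : ℝ → ℂ) : ℝ → ℂ :=
  fun x => -deriv f x + (starRingEnd ℂ) (wA x) * f x

/-- `φ_n = (1/√n!) Bⁿ φ₀` with `φ₀ = N_φ e^{-s_A}`. -/
def pbPhi (wB sA : ℝ → ℂ) (Nφ : ℂ) (n : ℕ) : ℝ → ℂ :=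
  fun x => (1 / (Real.sqrt n.factorial : ℂ)) *
    ((opB wB)^[n] (fun t => Nφ * Complex.exp (-sA t)) x)

/-- `Ψ_n = (1/√n!) (A†)ⁿ Ψ₀` with `Ψ₀ = N_Ψ e^{-conj s_B}`. -/
def pbPsi (wA sB : ℝ → ℂ) (NΨ : ℂ) (n : ℕ) : ℝ → ℂ :=
  fun x => (1 / (Real.sqrt n.factorial : ℂ)) *
    ((opAdag wA)^[n] (fun t => NΨ * Complex.exp (-(starRingEnd ℂ) (sB t))) x)

/-- The `n`-th physicists' Hermite polynomial, `H_n(y) = 2^{n/2} He_n(√2 y)`. -/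
def physHermite (n : ℕ) (y : ℝ) : ℝ :=
  (Real.sqrt 2) ^ n * Polynomial.aeval (Real.sqrt 2 * y) (Polynomial.hermite n)

/-- The `n`-th Hermite function `e_n(y) = (2ⁿ n! √π)^{-1/2} H_n(y) e^{-y²/2}`. -/
def hermiteFun (n : ℕ) (y : ℝ) : ℝ :=
  (1 / Real.sqrt ((2 : ℝ) ^ n * n.factorial * Real.sqrt Real.pi)) *
    physHermite n y * Real.exp (-y ^ 2 / 2)

/-- The shifted, dilated Hermite functions `c_n(x) = 2^{-1/4} e_n((x+k)/√2)`. -/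
def cFun (k : ℝ) (n : ℕ) (x : ℝ) : ℝ :=
  (2 : ℝ) ^ (-(1 : ℝ) / 4) * hermiteFun n ((x + k) / Real.sqrt 2)

/-- `ρ_A(x) = N_φ (2π)^{1/4} e^{(x+k)²/4} e^{-s_A(x)}`. -/
def rhoA (k : ℝ) (sA : ℝ → ℂ) (Nφ : ℂ) (x : ℝ) : ℂ :=
  Nφ * ((2 * Real.pi) ^ ((1 : ℝ) / 4) : ℝ) *
    Complex.exp (((x : ℂ) + (k : ℂ)) ^ 2 / 4) * Complex.exp (-sA x)

/-- `ρ_B(x) = N_Ψ (2π)^{1/4} e^{(x+k)²/4} e^{-conj s_B(x)}`. -/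
def rhoB (k : ℝ) (sB : ℝ → ℂ) (NΨ : ℂ) (x : ℝ) : ℂ :=
  NΨ * ((2 * Real.pi) ^ ((1 : ℝ) / 4) : ℝ) *
    Complex.exp (((x : ℂ) + (k : ℂ)) ^ 2 / 4) *
    Complex.exp (-(starRingEnd ℂ) (sB x))


open Polynomial in
lemma physHermite_hasDerivAt (n : ℕ) (y : ℝ) :
    HasDerivAt (physHermite n)
      (2 * y * physHermite n y - physHermite (n + 1) y) y := by
  have h0 : HasDerivAt (fun t : ℝ => Real.sqrt 2 * t) (Real.sqrt 2) y := by
    simpa using (hasDerivAt_id y).const_mul (Real.sqrt 2)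
  have h1 := (Polynomial.hasDerivAt_aeval (q := hermite n) (𝕜 := ℝ) (Real.sqrt 2 * y)).comp y h0
  have h2 := h1.const_mul ((Real.sqrt 2) ^ n)
  have hs2 : Real.sqrt 2 * Real.sqrt 2 = 2 := Real.mul_self_sqrt (by norm_num)
  refine h2.congr_deriv ?_
  simp only [physHermite, hermite_succ, map_sub, map_mul, aeval_X, Function.comp]
  linear_combination ((y * Real.sqrt 2 ^ n *
      (Polynomial.aeval (Real.sqrt 2 * y)) (Polynomial.hermite n))) * hs2

lemma coeff_ratio (n : ℕ) :
    (1 / Real.sqrt ((2 : ℝ) ^ n * n.factorial * Real.sqrt Real.pi))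
      = Real.sqrt (2 * (n + 1)) *
        (1 / Real.sqrt ((2 : ℝ) ^ (n + 1) * (n + 1).factorial * Real.sqrt Real.pi)) := by
  have h : ((2:ℝ) ^ (n+1) * (n+1).factorial * Real.sqrt Real.pi)
      = (2 * (n + 1)) * ((2:ℝ) ^ n * n.factorial * Real.sqrt Real.pi) := by
    push_cast [Nat.factorial_succ]; ring
  have h2 := Real.sqrt_mul (show (0:ℝ) ≤ 2 * (n + 1) by positivity)
    ((2:ℝ) ^ n * n.factorial * Real.sqrt Real.pi)
  have ha : Real.sqrt (2 * ((n:ℝ) + 1)) ≠ 0 := by positivity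
  have hb : Real.sqrt ((2:ℝ) ^ n * n.factorial * Real.sqrt Real.pi) ≠ 0 := by positivity
  rw [h, h2]
  field_simp

lemma hermiteFun_hasDerivAt (n : ℕ) (y : ℝ) :
    HasDerivAt (hermiteFun n)
      (y * hermiteFun n y - Real.sqrt (2 * (n + 1)) * hermiteFun (n + 1) y) y := by
  have hE : HasDerivAt (fun t : ℝ => Real.exp (-t ^ 2 / 2)) (Real.exp (-y ^ 2 / 2) * (-y)) y := by
    have h1 : HasDerivAt (fun t : ℝ => -t ^ 2 / 2) (-y) y := by
      have := ((hasDerivAt_pow 2 y).neg).div_const 2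
      refine this.congr_deriv ?_
      push_cast; ring
    exact h1.exp
  have h := (((physHermite_hasDerivAt n y).mul hE).const_mul
    (1 / Real.sqrt ((2 : ℝ) ^ n * n.factorial * Real.sqrt Real.pi)))
  have h' : HasDerivAt (hermiteFun n)
      ((1 / Real.sqrt ((2 : ℝ) ^ n * n.factorial * Real.sqrt Real.pi)) *
        ((2 * y * physHermite n y - physHermite (n + 1) y) * Real.exp (-y ^ 2 / 2)
          + physHermite n y * (Real.exp (-y ^ 2 / 2) * (-y)))) y := by
    apply h.congr_of_eventuallyEq
    filter_upwards with t
    simp only [hermiteFun, Pi.mul_apply]; ring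
  convert h' using 1
  simp only [hermiteFun]
  rw [coeff_ratio n]
  ring

lemma cFun_hasDerivAt (k : ℝ) (n : ℕ) (x : ℝ) :
    HasDerivAt (cFun k n)
      ((x + k) / 2 * cFun k n x - Real.sqrt (n + 1) * cFun k (n + 1) x) x := by
  have h0 : HasDerivAt (fun x : ℝ => (x + k) / Real.sqrt 2) (1 / Real.sqrt 2) x := by
    simpa using ((hasDerivAt_id x).add_const k).div_const (Real.sqrt 2)
  have h1 := ((hermiteFun_hasDerivAt n ((x + k) / Real.sqrt 2)).comp x h0).const_mul
    ((2:ℝ) ^ (-(1 : ℝ) / 4))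
  have h' : HasDerivAt (cFun k n)
      ((2:ℝ) ^ (-(1 : ℝ) / 4) *
        (((x + k) / Real.sqrt 2 * hermiteFun n ((x + k) / Real.sqrt 2)
          - Real.sqrt (2 * (n + 1)) * hermiteFun (n + 1) ((x + k) / Real.sqrt 2))
          * (1 / Real.sqrt 2))) x := by
    apply h1.congr_of_eventuallyEq
    filter_upwards with t
    simp only [cFun, Function.comp]
  convert h' using 1
  have hs2 : Real.sqrt 2 * Real.sqrt 2 = 2 := Real.mul_self_sqrt (by norm_num)
  have hs2' : Real.sqrt 2 ≠ 0 := by positivity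
  have hmul : Real.sqrt (2 * ((n:ℝ) + 1)) = Real.sqrt 2 * Real.sqrt (n + 1) :=
    Real.sqrt_mul (by norm_num) _
  simp only [cFun]
  rw [hmul]
  field_simp
  ring_nf
  rw [Real.sq_sqrt (show (0:ℝ) ≤ 2 by norm_num)]
  ring

lemma const_one : (2:ℝ) ^ (-(1:ℝ)/4) * (1 / Real.sqrt (Real.sqrt Real.pi)) *
    (2 * Real.pi) ^ ((1:ℝ)/4) = 1 := by
  have hpi : (0:ℝ) ≤ Real.pi := Real.pi_pos.le
  have h1 : Real.sqrt (Real.sqrt Real.pi) = Real.pi ^ ((1:ℝ)/4) := by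
    rw [Real.sqrt_eq_rpow, Real.sqrt_eq_rpow, ← Real.rpow_mul hpi]
    norm_num
  have h2 : (2 * Real.pi) ^ ((1:ℝ)/4) = 2 ^ ((1:ℝ)/4) * Real.pi ^ ((1:ℝ)/4) :=
    Real.mul_rpow (by norm_num) hpi
  have h3 : (2:ℝ) ^ (-(1:ℝ)/4) * 2 ^ ((1:ℝ)/4) = 1 := by
    rw [← Real.rpow_add (by norm_num : (0:ℝ) < 2)]; norm_num
  have h4 : Real.pi ^ ((1:ℝ)/4) ≠ 0 := by positivity
  rw [h1, h2]
  field_simp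
  rw [neg_div] at h3; exact h3

lemma pb_aux (k : ℝ) (u v s : ℝ → ℂ) (N : ℂ)
    (huv : ∀ x : ℝ, u x + v x = (x : ℂ) + (k : ℂ))
    (hs : ∀ x : ℝ, HasDerivAt s (u x) x) (n : ℕ) :
    (opB v)^[n] (fun t => N * Complex.exp (-s t))
      = fun x : ℝ => ((Real.sqrt n.factorial * cFun k n x : ℝ) : ℂ) *
          (N * ((2 * Real.pi) ^ ((1 : ℝ) / 4) : ℝ) *
            Complex.exp (((x : ℂ) + (k : ℂ)) ^ 2 / 4) * Complex.exp (-s x)) := by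
  induction n with
  | zero =>
    funext x
    simp only [Function.iterate_zero, id_eq, Nat.factorial_zero, Nat.cast_one,
      Real.sqrt_one, one_mul]
    have hy : ((x + k) / Real.sqrt 2) ^ 2 / 2 = (x + k) ^ 2 / 4 := by
      rw [div_pow, Real.sq_sqrt (by norm_num : (0:ℝ) ≤ 2)]
      ring
    have hc0 : cFun k 0 x = (2:ℝ) ^ (-(1:ℝ)/4) * (1 / Real.sqrt (Real.sqrt Real.pi)) *
        Real.exp (-((x + k) ^ 2 / 4)) := by
      simp only [cFun, hermiteFun, physHermite, Polynomial.hermite_zero, map_one, pow_zero,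
        Nat.factorial_zero, Nat.cast_one, one_mul, mul_one]
      rw [← hy]
      ring_nf
    have hexp : ((Real.exp (-((x + k) ^ 2 / 4)) : ℝ) : ℂ) *
        Complex.exp (((x : ℂ) + (k : ℂ)) ^ 2 / 4) = 1 := by
      rw [Complex.ofReal_exp, ← Complex.exp_add]
      rw [show ((-((x + k) ^ 2 / 4) : ℝ) : ℂ) + ((x : ℂ) + (k : ℂ)) ^ 2 / 4 = 0 by push_cast; ring]
      exact Complex.exp_zero
    have hone : (((2:ℝ) ^ (-(1:ℝ)/4) : ℝ) : ℂ) * (1 / ((Real.sqrt (Real.sqrt Real.pi) : ℝ) : ℂ)) *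
        (((2 * Real.pi) ^ ((1:ℝ)/4) : ℝ) : ℂ) = 1 := by
      have := congrArg (fun r : ℝ => (r : ℂ)) const_one
      push_cast at this
      convert this using 2
    rw [hc0]
    push_cast at hexp ⊢
    linear_combination (-(N * Complex.exp (-s x)) * ((((2:ℝ) ^ (-(1:ℝ)/4) : ℝ) : ℂ) *
        (1 / ((Real.sqrt (Real.sqrt Real.pi) : ℝ) : ℂ)) *
        (((2 * Real.pi) ^ ((1:ℝ)/4) : ℝ) : ℂ))) * hexp
      + (-(N * Complex.exp (-s x))) * hone
  | succ n ih =>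
    rw [Function.iterate_succ_apply', ih]
    funext x
    simp only [opB]
    have h1 : HasDerivAt (fun t : ℝ => ((t:ℂ) + (k:ℂ))) 1 x := by
      simpa using (HasDerivAt.ofReal_comp (hasDerivAt_id x)).add_const (k:ℂ)
    have h2 := (h1.mul h1).div_const 4
    have hq : HasDerivAt (fun t : ℝ => ((t:ℂ) + (k:ℂ)) ^ 2 / 4)
        ((1 * ((x:ℂ) + k) + ((x:ℂ) + k) * 1) / 4) x := by
      apply h2.congr_of_eventuallyEq
      filter_upwards with t
      simp only [Pi.mul_apply]; ring
    have hE1 := hq.cexp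
    have hE2 := ((hs x).neg).cexp
    have hρ := (hE1.const_mul (N * (((2 * Real.pi) ^ ((1:ℝ)/4) : ℝ) : ℂ))).mul hE2
    have hcF := ((cFun_hasDerivAt k n x).const_mul (Real.sqrt n.factorial)).ofReal_comp
    have hF := hcF.mul hρ
    erw [hF.deriv]; simp only [Pi.mul_apply, Pi.neg_apply]
    have hfact : Real.sqrt ((n + 1).factorial : ℝ)
        = Real.sqrt ((n : ℝ) + 1) * Real.sqrt (n.factorial : ℝ) := by
      rw [Nat.factorial_succ]
      push_cast
      rw [Real.sqrt_mul (by positivity)]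
    have huvx := huv x
    rw [hfact]
    push_cast
    linear_combination ((Real.sqrt (n.factorial : ℝ) : ℂ) * (cFun k n x : ℂ) *
      (N * (((2 * Real.pi) ^ ((1:ℝ)/4) : ℝ) : ℂ) * Complex.exp (((x:ℂ) + k) ^ 2 / 4) *
        Complex.exp (-s x))) * huvx

theorem stmt9 (k : ℝ) (wA wB sA sB : ℝ → ℂ) (Nφ NΨ : ℂ)
    (hwA : ContDiff ℝ (⊤ : ℕ∞) wA) (hwB : ContDiff ℝ (⊤ : ℕ∞) wB)
    (hsum : ∀ x : ℝ, wA x + wB x = (x : ℂ) + (k : ℂ))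
    (hsA : ∀ x : ℝ, HasDerivAt sA (wA x) x)
    (hsB : ∀ x : ℝ, HasDerivAt sB (wB x) x)
    (hnorm : ∀ x : ℝ, sA x + sB x = (x : ℂ) ^ 2 / 2 + (k : ℂ) * (x : ℂ))
    (hNφ : Nφ ≠ 0) (hNΨ : NΨ ≠ 0)
    (hN : Nφ * (starRingEnd ℂ) NΨ
      = Complex.exp (-(k : ℂ) ^ 2 / 2) / (Real.sqrt (2 * Real.pi) : ℂ)) :
    (∀ (n : ℕ) (x : ℝ),
      pbPhi wB sA Nφ n x = (cFun k n x : ℂ) * rhoA k sA Nφ x) ∧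
    (∀ (n : ℕ) (x : ℝ),
      pbPsi wA sB NΨ n x = (cFun k n x : ℂ) * rhoB k sB NΨ x) ∧
    (∀ x : ℝ, rhoA k sA Nφ x * (starRingEnd ℂ) (rhoB k sB NΨ x) = 1) := by
  have hfacpos : ∀ n : ℕ, ((Real.sqrt n.factorial : ℝ) : ℂ) ≠ 0 := by
    intro n
    have : (0:ℝ) < Real.sqrt n.factorial := Real.sqrt_pos.mpr (by positivity)
    simpa using this.ne'
  refine ⟨?_, ?_, ?_⟩
  · intro n x
    have h := pb_aux k wA wB sA Nφ hsum hsA n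
    simp only [pbPhi, h, rhoA]
    push_cast
    field_simp [hfacpos n]
  · intro n x
    have huv : ∀ x : ℝ, (starRingEnd ℂ) (wB x) + (starRingEnd ℂ) (wA x) = (x : ℂ) + (k : ℂ) := by
      intro x
      have h := congrArg (starRingEnd ℂ) (hsum x)
      rw [map_add, map_add, Complex.conj_ofReal, Complex.conj_ofReal] at h
      rw [add_comm]
      exact h
    have hs : ∀ x : ℝ, HasDerivAt (fun t => (starRingEnd ℂ) (sB t)) ((starRingEnd ℂ) (wB x)) x := by
      intro x
      simp only [starRingEnd_apply]
      exact (hsB x).star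
    have hop : opAdag wA = opB (fun x => (starRingEnd ℂ) (wA x)) := rfl
    have h := pb_aux k (fun x => (starRingEnd ℂ) (wB x)) (fun x => (starRingEnd ℂ) (wA x))
      (fun t => (starRingEnd ℂ) (sB t)) NΨ huv hs n
    simp only [pbPsi, hop, h, rhoB]
    push_cast
    field_simp [hfacpos n]
  · intro x
    have hc4 : ((2 * Real.pi) ^ ((1:ℝ)/4) : ℝ) * ((2 * Real.pi) ^ ((1:ℝ)/4) : ℝ)
        = Real.sqrt (2 * Real.pi) := by
      rw [← Real.rpow_add (by positivity), Real.sqrt_eq_rpow]; norm_num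
    have hc4' : (((2 * Real.pi) ^ ((1:ℝ)/4) : ℝ) : ℂ) * (((2 * Real.pi) ^ ((1:ℝ)/4) : ℝ) : ℂ)
        = ((Real.sqrt (2 * Real.pi) : ℝ) : ℂ) := by
      rw [← Complex.ofReal_mul, hc4]
    have hsqrt : ((Real.sqrt (2 * Real.pi) : ℝ) : ℂ) ≠ 0 := by
      have : (0:ℝ) < Real.sqrt (2 * Real.pi) := Real.sqrt_pos.mpr (by positivity)
      simpa using this.ne'
    have hE : Complex.exp (((x:ℂ) + k) ^ 2 / 4) * Complex.exp (((x:ℂ) + k) ^ 2 / 4) *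
        (Complex.exp (-sA x) * Complex.exp (-sB x)) = Complex.exp ((k:ℂ) ^ 2 / 2) := by
      rw [← Complex.exp_add, ← Complex.exp_add, ← Complex.exp_add]
      congr 1
      linear_combination (-1 : ℂ) * hnorm x
    have hNN : Nφ * (starRingEnd ℂ) NΨ * ((Real.sqrt (2 * Real.pi) : ℝ) : ℂ) *
        Complex.exp ((k:ℂ) ^ 2 / 2) = 1 := by
      rw [hN, div_mul_cancel₀ _ hsqrt, ← Complex.exp_add,
        show -(k:ℂ) ^ 2 / 2 + (k:ℂ) ^ 2 / 2 = 0 by ring, Complex.exp_zero]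
    simp only [rhoA, rhoB, map_mul, map_neg, map_div₀, map_pow, map_add,
      Complex.conj_ofReal, ← Complex.exp_conj, Complex.conj_conj, map_ofNat]
    linear_combination (Nφ * (starRingEnd ℂ) NΨ * (((2 * Real.pi) ^ ((1:ℝ)/4) : ℝ) : ℂ) *
        (((2 * Real.pi) ^ ((1:ℝ)/4) : ℝ) : ℂ)) * hE
      + (Nφ * (starRingEnd ℂ) NΨ * Complex.exp ((k:ℂ) ^ 2 / 2)) * hc4'
      + hNN

end
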